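/- Let λ = (d−2)/2 and let C_ℓ^{(d−1)/2} be the Gegenbauer polynomial of degree ℓ. There exist δ₀ > 0 and c > 0 depending only on d such that for all L ≥ 1, all 0 ≤ ℓ ≤ L, and all 0 < δ ≤ δ₀: ∫_0^{δ/(2(L+1))} C_ℓ^{(d−1)/2}(cos θ) · sin^{d−1}θ dθ ≥ c · C_ℓ^{(d−1)/2}(1) · (δ/L)^d. -/

import Mathlib

open MeasureTheory MvPolynomial
open scoped RealInnerProductSpace ENNReal

noncomputable section

abbrev Esp (d : ℕ) : Type := EuclideanSpace ℝ (Fin (d+1))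

abbrev Sph (d : ℕ) := Metric.sphere (0 : Esp d) 1

/-- The surface measure on the unit sphere `S^d`. -/
def sphMeasure (d : ℕ) : Measure (Sph d) := (volume : Measure (Esp d)).toSphere

/-- The Laplacian on polynomials in `d+1` variables. -/
def polyLap (d : ℕ) : MvPolynomial (Fin (d+1)) ℝ →ₗ[ℝ] MvPolynomial (Fin (d+1)) ℝ :=
  ∑ i : Fin (d+1), ((pderiv i).toLinearMap ∘ₗ (pderiv i).toLinearMap)

/-- Homogeneous harmonic polynomials of degree `ℓ` in `d+1` variables. -/
def harmHomog (d ℓ : ℕ) : Submodule ℝ (MvPolynomial (Fin (d+1)) ℝ) :=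
  homogeneousSubmodule (Fin (d+1)) ℝ ℓ ⊓ LinearMap.ker (polyLap d)

/-- Restriction of polynomials to the unit sphere, as a linear map. -/
def restrictSph (d : ℕ) : MvPolynomial (Fin (d+1)) ℝ →ₗ[ℝ] (Sph d → ℝ) where
  toFun P := fun x => eval (fun i => (x : Esp d) i) P
  map_add' P Q := by funext x; simp
  map_smul' r P := by funext x; simp [smul_eval]

/-- Spherical harmonics of degree `ℓ` on `S^d`. -/
def Hsp (d ℓ : ℕ) : Submodule ℝ (Sph d → ℝ) := (harmHomog d ℓ).map (restrictSph d)

/-- Spherical harmonics of degree at most `L` on `S^d`. -/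
def PiSp (d L : ℕ) : Submodule ℝ (Sph d → ℝ) := ⨆ ℓ : Fin (L+1), Hsp d ℓ

/-- Sums of homogeneous harmonic polynomials of degrees `≤ L` :
polynomial (harmonic-extension) model of `Π_L`. -/
def harmPolyLe (d L : ℕ) : Submodule ℝ (MvPolynomial (Fin (d+1)) ℝ) :=
  ⨆ ℓ : Fin (L+1), harmHomog d ℓ

/-- The north pole of `S^d`. -/
def north (d : ℕ) : Sph d :=
  ⟨EuclideanSpace.single 0 1, by
    simp [mem_sphere_zero_iff_norm, EuclideanSpace.norm_single]⟩

/-- The geodesic distance on `S^d`. -/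
def gdist (d : ℕ) (x y : Sph d) : ℝ := Real.arccos ⟪(x : Esp d), (y : Esp d)⟫

/-- The Gegenbauer polynomials `C_ℓ^ν`, as functions on `ℝ`, defined by the standard
three-term recurrence. -/
def gegen (ν : ℝ) : ℕ → ℝ → ℝ
  | 0 => fun _ => 1
  | 1 => fun x => 2 * ν * x
  | (n+2) => fun x =>
      (2 * ((n : ℝ) + 1 + ν) * x * gegen ν (n+1) x - ((n : ℝ) + 2 * ν) * gegen ν n x) /
        ((n : ℝ) + 2)

/-! For `ν ≥ 0` the Gegenbauer polynomial has a cosine expansion with nonnegative coefficients,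
`C_ℓ^ν(cos θ) = ∑_{i+j=ℓ} (ν)_i (ν)_j / (i! j!) · cos((i - j)θ)`, read off from the generating
function `(1 - 2t cos θ + t²)^(-ν) = (1 - t e^{iθ})^(-ν) (1 - t e^{-iθ})^(-ν)` and verified here
through the three-term recurrence. Once `ℓ|θ| ≤ 1` every cosine in it is at least `1/2`, so
`C_ℓ^ν(cos θ) ≥ C_ℓ^ν(1)/2`. With `sin θ ≥ θ/2` on `[0, π/2]` the integral over `[0, T]` is at least
`C_ℓ^ν(1) T^d / (2^d d)`, and `T = δ/(2(L+1)) ≥ δ/(4L)`. -/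

open Finset Real

def gegenCoeff (ν : ℝ) (k : ℕ) : ℝ := (ascPochhammer ℝ k).eval ν / k.factorial

@[simp]
lemma gegenCoeff_zero (ν : ℝ) : gegenCoeff ν 0 = 1 := by
  simp [gegenCoeff]

lemma gegenCoeff_succ (ν : ℝ) (k : ℕ) :
    gegenCoeff ν (k + 1) = gegenCoeff ν k * (ν + k) / (k + 1) := by
  simp only [gegenCoeff, ascPochhammer_succ_eval, Nat.factorial_succ, Nat.cast_mul,
    Nat.cast_succ]
  field_simp

lemma gegenCoeff_nonneg {ν : ℝ} (hν : 0 ≤ ν) : ∀ k, 0 ≤ gegenCoeff ν k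
  | 0 => by simp
  | k + 1 => by
    rw [gegenCoeff_succ]
    have := gegenCoeff_nonneg hν k
    positivity

lemma gegenCoeff_mul_gegenCoeff_recurrence (ν : ℝ) (i j : ℕ) :
    ((i + j : ℝ) + 2) * (gegenCoeff ν (i + 1) * gegenCoeff ν (j + 1)) =
      ((i + j : ℝ) + 1 + ν) * (gegenCoeff ν i * gegenCoeff ν (j + 1) +
          gegenCoeff ν (i + 1) * gegenCoeff ν j) -
        ((i + j : ℝ) + 2 * ν) * (gegenCoeff ν i * gegenCoeff ν j) := by
  rw [gegenCoeff_succ, gegenCoeff_succ]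
  field_simp
  ring

def gegenTrig (ν : ℝ) (ℓ : ℕ) (θ : ℝ) : ℝ :=
  ∑ p ∈ antidiagonal ℓ, gegenCoeff ν p.1 * gegenCoeff ν p.2 * cos ((p.1 - p.2 : ℝ) * θ)

lemma gegenTrig_add_two (ν : ℝ) (n : ℕ) (θ : ℝ) :
    gegenTrig ν (n + 2) θ = 2 * (gegenCoeff ν (n + 2) * cos (((n : ℝ) + 2) * θ)) +
      ∑ p ∈ antidiagonal n, gegenCoeff ν (p.1 + 1) * gegenCoeff ν (p.2 + 1) *
        cos ((p.1 - p.2 : ℝ) * θ) := by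
  rw [gegenTrig, Nat.sum_antidiagonal_succ, Nat.sum_antidiagonal_succ']
  simp only [Nat.cast_add, Nat.cast_one, Nat.cast_zero, gegenCoeff_zero,
    add_sub_add_right_eq_sub, zero_sub, sub_zero, neg_mul, cos_neg]
  ring_nf

lemma two_cos_mul_gegenTrig_add_one (ν : ℝ) (n : ℕ) (θ : ℝ) :
    2 * cos θ * gegenTrig ν (n + 1) θ = 2 * (gegenCoeff ν (n + 1) * cos (((n : ℝ) + 2) * θ)) +
      ∑ p ∈ antidiagonal n, (gegenCoeff ν p.1 * gegenCoeff ν (p.2 + 1) +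
        gegenCoeff ν (p.1 + 1) * gegenCoeff ν p.2) * cos ((p.1 - p.2 : ℝ) * θ) := by
  have hcos (x y : ℝ) : 2 * cos θ * cos ((x - y) * θ) =
      cos ((x + 1 - y) * θ) + cos ((x - (y + 1)) * θ) := by
    rw [show (x + 1 - y) * θ = (x - y) * θ + θ by ring,
      show (x - (y + 1)) * θ = (x - y) * θ - θ by ring, cos_add, cos_sub]
    ring
  have hsplit : 2 * cos θ * gegenTrig ν (n + 1) θ =
      (∑ p ∈ antidiagonal (n + 1), gegenCoeff ν p.1 * gegenCoeff ν p.2 *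
        cos ((p.1 + 1 - p.2 : ℝ) * θ)) +
      ∑ p ∈ antidiagonal (n + 1), gegenCoeff ν p.1 * gegenCoeff ν p.2 *
        cos ((p.1 - (p.2 + 1) : ℝ) * θ) := by
    rw [gegenTrig, mul_sum, ← sum_add_distrib]
    refine sum_congr rfl fun p _ => ?_
    linear_combination gegenCoeff ν p.1 * gegenCoeff ν p.2 * hcos p.1 p.2
  rw [hsplit, Nat.sum_antidiagonal_succ', Nat.sum_antidiagonal_succ]
  simp only [Nat.cast_add, Nat.cast_one, Nat.cast_zero, gegenCoeff_zero,
    add_sub_add_right_eq_sub, zero_sub, neg_mul, cos_neg, add_mul, sum_add_distrib]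
  ring_nf

lemma gegenTrig_recurrence (ν : ℝ) (n : ℕ) (θ : ℝ) :
    ((n : ℝ) + 2) * gegenTrig ν (n + 2) θ =
      2 * ((n : ℝ) + 1 + ν) * cos θ * gegenTrig ν (n + 1) θ -
        ((n : ℝ) + 2 * ν) * gegenTrig ν n θ := by
  have hboundary :
      ((n : ℝ) + 2) * gegenCoeff ν (n + 2) = ((n : ℝ) + 1 + ν) * gegenCoeff ν (n + 1) := by
    rw [gegenCoeff_succ]
    push_cast
    field_simp
    ring
  have hmid : ∑ p ∈ antidiagonal n, ((n : ℝ) + 2) *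
      (gegenCoeff ν (p.1 + 1) * gegenCoeff ν (p.2 + 1) * cos ((p.1 - p.2 : ℝ) * θ)) =
      ∑ p ∈ antidiagonal n, (((n : ℝ) + 1 + ν) * ((gegenCoeff ν p.1 * gegenCoeff ν (p.2 + 1) +
        gegenCoeff ν (p.1 + 1) * gegenCoeff ν p.2) * cos ((p.1 - p.2 : ℝ) * θ)) -
        ((n : ℝ) + 2 * ν) * (gegenCoeff ν p.1 * gegenCoeff ν p.2 * cos ((p.1 - p.2 : ℝ) * θ))) := by
    refine sum_congr rfl fun p hp => ?_
    rw [← mem_antidiagonal.mp hp]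
    push_cast
    linear_combination cos ((p.1 - p.2 : ℝ) * θ) * gegenCoeff_mul_gegenCoeff_recurrence ν p.1 p.2
  rw [← mul_sum, sum_sub_distrib, ← mul_sum, ← mul_sum] at hmid
  rw [gegenTrig_add_two, show 2 * ((n : ℝ) + 1 + ν) * cos θ * gegenTrig ν (n + 1) θ =
    ((n : ℝ) + 1 + ν) * (2 * cos θ * gegenTrig ν (n + 1) θ) by ring,
    two_cos_mul_gegenTrig_add_one, gegenTrig]
  linear_combination hmid + 2 * cos (((n : ℝ) + 2) * θ) * hboundary

lemma gegen_cos_eq_gegenTrig (ν : ℝ) (ℓ : ℕ) (θ : ℝ) : gegen ν ℓ (cos θ) = gegenTrig ν ℓ θ := by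
  induction ℓ using Nat.twoStepInduction with
  | zero => simp [gegen, gegenTrig]
  | one =>
    simp [gegen, gegenTrig, Nat.sum_antidiagonal_succ, gegenCoeff_succ]
    ring
  | more n ih ih1 =>
    rw [gegen]
    dsimp only
    rw [ih, ih1, div_eq_iff (by positivity), mul_comm]
    linear_combination (-1 : ℝ) * gegenTrig_recurrence ν n θ

lemma gegen_one_eq_sum (ν : ℝ) (ℓ : ℕ) :
    gegen ν ℓ 1 = ∑ p ∈ antidiagonal ℓ, gegenCoeff ν p.1 * gegenCoeff ν p.2 := by
  simpa [gegenTrig] using gegen_cos_eq_gegenTrig ν ℓ 0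

lemma gegen_one_nonneg {ν : ℝ} (hν : 0 ≤ ν) (ℓ : ℕ) : 0 ≤ gegen ν ℓ 1 := by
  rw [gegen_one_eq_sum]
  exact sum_nonneg fun p _ => mul_nonneg (gegenCoeff_nonneg hν _) (gegenCoeff_nonneg hν _)

lemma half_gegen_one_le_gegen_cos {ν : ℝ} (hν : 0 ≤ ν) {ℓ : ℕ} {θ : ℝ} (hθ : ℓ * |θ| ≤ 1) :
    gegen ν ℓ 1 / 2 ≤ gegen ν ℓ (cos θ) := by
  rw [gegen_cos_eq_gegenTrig, gegenTrig, gegen_one_eq_sum, sum_div]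
  refine sum_le_sum fun p hp => ?_
  have hdiff : |(p.1 - p.2 : ℝ)| ≤ ℓ := by
    rw [← mem_antidiagonal.mp hp, Nat.cast_add, abs_le]
    have h₁ : (0 : ℝ) ≤ p.1 := p.1.cast_nonneg
    have h₂ : (0 : ℝ) ≤ p.2 := p.2.cast_nonneg
    constructor <;> linarith
  have harg : |(p.1 - p.2 : ℝ) * θ| ≤ 1 := by
    rw [abs_mul]
    exact (mul_le_mul_of_nonneg_right hdiff (abs_nonneg θ)).trans hθ
  have hcos : 1 / 2 ≤ cos ((p.1 - p.2 : ℝ) * θ) := by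
    have := one_sub_sq_div_two_le_cos (x := (p.1 - p.2 : ℝ) * θ)
    linarith [(sq_le_one_iff_abs_le_one _).mpr harg]
  have hcoeff := mul_nonneg (gegenCoeff_nonneg hν p.1) (gegenCoeff_nonneg hν p.2)
  linarith [mul_le_mul_of_nonneg_left hcos hcoeff]

lemma continuous_gegen (ν : ℝ) (ℓ : ℕ) : Continuous (gegen ν ℓ) := by
  induction ℓ using Nat.twoStepInduction with
  | zero => exact continuous_const
  | one => exact continuous_const.mul continuous_id
  | more n ih ih1 => exact ((continuous_const.mul continuous_id).mul ih1 |>.sub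
      (continuous_const.mul ih)).div_const _

lemma half_le_sin {x : ℝ} (hx : 0 ≤ x) (hx' : x ≤ π / 2) : x / 2 ≤ sin x := by
  refine le_trans ?_ (mul_le_sin hx hx')
  rw [div_eq_inv_mul]
  gcongr
  rw [le_div_iff₀ pi_pos]
  linarith [pi_le_four]

lemma integral_gegen_cos_mul_sin_pow_ge {ν : ℝ} (hν : 0 ≤ ν) (ℓ n : ℕ) {T : ℝ} (hT : 0 ≤ T)
    (hℓT : ℓ * T ≤ 1) (hTπ : T ≤ π / 2) :
    gegen ν ℓ 1 * T ^ (n + 1) / (2 ^ (n + 1) * (n + 1)) ≤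
      ∫ θ in (0 : ℝ)..T, gegen ν ℓ (cos θ) * sin θ ^ n := by
  have hpoint : ∀ θ ∈ Set.Icc 0 T,
      gegen ν ℓ 1 / 2 * (θ / 2) ^ n ≤ gegen ν ℓ (cos θ) * sin θ ^ n := by
    rintro θ ⟨hθ0, hθT⟩
    have hgegen := half_gegen_one_le_gegen_cos hν (θ := θ)
      (by rw [abs_of_nonneg hθ0]; exact le_trans (by gcongr) hℓT)
    have hsin := half_le_sin hθ0 (hθT.trans hTπ)
    have := gegen_one_nonneg hν ℓ
    gcongr
    exact (div_nonneg this zero_le_two).trans hgegen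
  calc gegen ν ℓ 1 * T ^ (n + 1) / (2 ^ (n + 1) * (n + 1))
      = ∫ θ in (0 : ℝ)..T, gegen ν ℓ 1 / 2 * (θ / 2) ^ n := by
        simp only [div_pow, intervalIntegral.integral_const_mul, intervalIntegral.integral_div,
          integral_pow]
        field_simp
        ring
    _ ≤ ∫ θ in (0 : ℝ)..T, gegen ν ℓ (cos θ) * sin θ ^ n := by
        refine intervalIntegral.integral_mono_on hT
          (Continuous.intervalIntegrable (by fun_prop) _ _) ?_ hpoint
        exact ((continuous_gegen ν ℓ).comp continuous_cos |>.mul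
          (continuous_sin.pow n)).intervalIntegrable _ _

/-- There are `δ₀, c > 0` depending only on `d` such that for all `L ≥ 1`, `ℓ ≤ L` and
`0 < δ ≤ δ₀`:
`∫_0^{δ/(2(L+1))} C_ℓ^{(d−1)/2}(cos θ) sin^{d−1}θ dθ ≥ c · C_ℓ^{(d−1)/2}(1) · (δ/L)^d`. -/
theorem stmt19 (d : ℕ) (hd : 2 ≤ d) :
    ∃ δ₀ c : ℝ, 0 < δ₀ ∧ 0 < c ∧ ∀ L : ℕ, 1 ≤ L → ∀ ℓ : ℕ, ℓ ≤ L → ∀ δ : ℝ,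
      0 < δ → δ ≤ δ₀ →
      c * gegen (((d : ℝ) - 1) / 2) ℓ 1 * (δ / L) ^ d ≤
        ∫ θ in (0 : ℝ)..(δ / (2 * ((L : ℝ) + 1))),
          gegen (((d : ℝ) - 1) / 2) ℓ (Real.cos θ) * Real.sin θ ^ (d - 1) := by
  refine ⟨1, 1 / (8 ^ d * d), one_pos, by positivity, fun L hL ℓ hℓ δ hδ hδ1 => ?_⟩
  set T := δ / (2 * ((L : ℝ) + 1))
  have hν : 0 ≤ ((d : ℝ) - 1) / 2 := by
    have : (2 : ℝ) ≤ d := mod_cast hd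
    linarith
  have hL1 : (1 : ℝ) ≤ L := by exact_mod_cast hL
  have hℓL : (ℓ : ℝ) ≤ L := by exact_mod_cast hℓ
  have hT : 0 ≤ T := by positivity
  have hℓT : ℓ * T ≤ 1 := by
    rw [← mul_div_assoc, div_le_one (by positivity)]
    nlinarith
  have hTπ : T ≤ π / 2 := by
    rw [div_le_div_iff₀ (by positivity) two_pos]
    nlinarith [pi_gt_three]
  have hδL : δ / L ≤ 4 * T := by
    rw [← mul_div_assoc, div_le_div_iff₀ (by positivity) (by positivity)]
    nlinarith
  have key := integral_gegen_cos_mul_sin_pow_ge hν ℓ (d - 1) hT hℓT hTπ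
  have hd1 : 1 ≤ d := by omega
  rw [Nat.sub_add_cancel hd1, show ((d - 1 : ℕ) : ℝ) + 1 = d by simp [Nat.cast_sub hd1]] at key
  refine le_trans ?_ key
  have := gegen_one_nonneg hν ℓ
  calc 1 / (8 ^ d * d) * gegen (((d : ℝ) - 1) / 2) ℓ 1 * (δ / L) ^ d
      ≤ 1 / (8 ^ d * d) * gegen (((d : ℝ) - 1) / 2) ℓ 1 * (4 * T) ^ d := by gcongr
    _ = _ := by
        rw [mul_pow, show (8 : ℝ) ^ d = 2 ^ d * 4 ^ d by rw [← mul_pow]; norm_num]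
        field_simp
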